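/- Let Z be a finite-dimensional D-invariant subspace of formal power series with D-invariant least space Z↓, and let T: C[[t]] → Z be the projector adjoint to the inclusion Z↓ ↪ C[τ] with respect to the sesquilinear pairings. Then T restricted to Z is the identity (T is a retraction) and the kernel of T equals the annihilator (Z↓)^⊥. -/

import Mathlib

noncomputable def degF {n : ℕ} (ν : Fin n →₀ ℕ) : ℕ := ν.sum fun _ k => k

noncomputable def pairS {n : ℕ} (p : MvPolynomial (Fin n) ℂ) (f : MvPowerSeries (Fin n) ℂ) : ℂ :=
  ∑ ν ∈ p.support,
    ((∏ i, Nat.factorial (ν i) : ℕ) : ℂ) * MvPolynomial.coeff ν p *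
      (starRingEnd ℂ) (MvPowerSeries.coeff ν f)

noncomputable def leastPartD {n : ℕ} (f : MvPowerSeries (Fin n) ℂ) (d : ℕ) :
    MvPolynomial (Fin n) ℂ :=
  ∑ ν ∈ (Finset.Iic ((Finsupp.equivFunOnFinite.symm fun _ => d) : Fin n →₀ ℕ)).filter
      (fun ν => degF ν = d),
    MvPolynomial.monomial ν (MvPowerSeries.coeff ν f)

noncomputable def ordPS {n : ℕ} (f : MvPowerSeries (Fin n) ℂ) : ℕ :=
  sInf {d | ∃ ν, degF ν = d ∧ MvPowerSeries.coeff ν f ≠ 0}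

noncomputable def leastPart {n : ℕ} (f : MvPowerSeries (Fin n) ℂ) : MvPolynomial (Fin n) ℂ :=
  leastPartD f (ordPS f)

noncomputable def leastSpace {n : ℕ} (Z : Submodule ℂ (MvPowerSeries (Fin n) ℂ)) :
    Submodule ℂ (MvPolynomial (Fin n) ℂ) :=
  Submodule.span ℂ (leastPart '' (Z : Set (MvPowerSeries (Fin n) ℂ)))

def DInvP {n : ℕ} (W : Submodule ℂ (MvPolynomial (Fin n) ℂ)) : Prop :=
  ∀ p ∈ W, ∀ i, MvPolynomial.pderiv i p ∈ W

noncomputable def pderivPS {n : ℕ} (i : Fin n) (f : MvPowerSeries (Fin n) ℂ) :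
    MvPowerSeries (Fin n) ℂ :=
  fun ν => ((ν i + 1 : ℕ) : ℂ) * MvPowerSeries.coeff (ν + Finsupp.single i 1) f

/-! The pairing of a nonzero series `f` with its least part `f↓` is a weighted sum
`∑ ν! |f̂(ν)|²` over the lowest-degree coefficients of `f`, hence nonzero. So no nonzero element
of `Z` is annihilated by `Z↓`. Both claims follow, since `T f - f` (for `f ∈ Z`) and `T f`
(for `f ⊥ Z↓`) are elements of `Z` annihilated by `Z↓`. -/

lemma pairS_zero {n : ℕ} (p : MvPolynomial (Fin n) ℂ) : pairS p 0 = 0 := by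
  simp [pairS]

lemma pairS_sub {n : ℕ} (p : MvPolynomial (Fin n) ℂ) (f g : MvPowerSeries (Fin n) ℂ) :
    pairS p (f - g) = pairS p f - pairS p g := by
  simp [pairS, mul_sub, Finset.sum_sub_distrib]

lemma degF_eq_degree {n : ℕ} (ν : Fin n →₀ ℕ) : degF ν = ν.degree := rfl

open MvPolynomial in
lemma coeff_leastPart {n : ℕ} (f : MvPowerSeries (Fin n) ℂ) (μ : Fin n →₀ ℕ) :
    coeff μ (leastPart f) = if degF μ = ordPS f then MvPowerSeries.coeff μ f else 0 := by
  rw [leastPart, leastPartD, coeff_sum]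
  simp only [coeff_monomial, Finset.sum_ite_eq', Finset.mem_filter, Finset.mem_Iic]
  refine if_congr ⟨And.right, fun h => ⟨fun i => ?_, h⟩⟩ rfl rfl
  simpa [← h, degF_eq_degree] using Finsupp.le_degree i μ

lemma exists_degF_eq_ordPS_coeff_ne_zero {n : ℕ} {f : MvPowerSeries (Fin n) ℂ} (hf : f ≠ 0) :
    ∃ ν, degF ν = ordPS f ∧ MvPowerSeries.coeff ν f ≠ 0 := by
  obtain ⟨ν, hν⟩ := (MvPowerSeries.ne_zero_iff_exists_coeff_ne_zero f).mp hf
  exact Nat.sInf_mem (s := {d | ∃ ν, degF ν = d ∧ MvPowerSeries.coeff ν f ≠ 0}) ⟨_, ν, rfl, hν⟩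

lemma pairS_eq_sum_normSq {n : ℕ} (p : MvPolynomial (Fin n) ℂ) (f : MvPowerSeries (Fin n) ℂ)
    (hpf : ∀ ν ∈ p.support, MvPolynomial.coeff ν p = MvPowerSeries.coeff ν f) :
    pairS p f =
      ((∑ ν ∈ p.support, (∏ i, (ν i).factorial : ℕ) * Complex.normSq (MvPolynomial.coeff ν p) : ℝ)
        : ℂ) := by
  rw [pairS]
  push_cast
  refine Finset.sum_congr rfl fun ν hν => ?_
  rw [← hpf ν hν, mul_assoc, Complex.mul_conj]

lemma pairS_leastPart_ne_zero {n : ℕ} {f : MvPowerSeries (Fin n) ℂ} (hf : f ≠ 0) :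
    pairS (leastPart f) f ≠ 0 := by
  have hcoeff : ∀ ν ∈ (leastPart f).support,
      MvPolynomial.coeff ν (leastPart f) = MvPowerSeries.coeff ν f := fun ν hν => by
    rw [MvPolynomial.mem_support_iff, coeff_leastPart] at hν
    rw [coeff_leastPart, if_pos (by by_contra h; simp [h] at hν)]
  obtain ⟨ν, hνdeg, hν⟩ := exists_degF_eq_ordPS_coeff_ne_zero hf
  have hνsupp : ν ∈ (leastPart f).support := by
    rwa [MvPolynomial.mem_support_iff, coeff_leastPart, if_pos hνdeg]
  rw [pairS_eq_sum_normSq _ _ hcoeff, Complex.ofReal_ne_zero]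
  refine (Finset.sum_pos (fun μ hμ => mul_pos ?_ ?_) ⟨ν, hνsupp⟩).ne'
  · exact_mod_cast Finset.prod_pos fun i _ => Nat.factorial_pos (μ i)
  · exact Complex.normSq_pos.mpr (MvPolynomial.mem_support_iff.mp hμ)

lemma eq_zero_of_pairS_leastSpace_eq_zero {n : ℕ} {Z : Submodule ℂ (MvPowerSeries (Fin n) ℂ)}
    {f : MvPowerSeries (Fin n) ℂ} (hf : f ∈ Z) (h : ∀ p ∈ leastSpace Z, pairS p f = 0) :
    f = 0 := by
  by_contra hf0
  exact pairS_leastPart_ne_zero hf0 (h _ (Submodule.subset_span ⟨f, hf, rfl⟩))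

theorem stmt15_general {n : ℕ} (Z : Submodule ℂ (MvPowerSeries (Fin n) ℂ))
    (T : MvPowerSeries (Fin n) ℂ → MvPowerSeries (Fin n) ℂ)
    (hTZ : ∀ f, T f ∈ Z)
    (hTadj : ∀ f, ∀ p ∈ leastSpace Z, pairS p (T f) = pairS p f) :
    (∀ f ∈ Z, T f = f) ∧
    (∀ f, T f = 0 ↔ ∀ p ∈ leastSpace Z, pairS p f = 0) := by
  refine ⟨fun f hf => sub_eq_zero.mp ?_, fun f => ⟨fun h p hp => ?_, fun h => ?_⟩⟩
  · refine eq_zero_of_pairS_leastSpace_eq_zero (Z.sub_mem (hTZ f) hf) fun p hp => ?_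
    rw [pairS_sub, hTadj f p hp, sub_self]
  · rw [← hTadj f p hp, h, pairS_zero]
  · exact eq_zero_of_pairS_leastSpace_eq_zero (hTZ f) fun p hp => (hTadj f p hp).trans (h p hp)

/-- the projector T adjoint to the inclusion Z↓ ↪ C[τ] is a retraction onto Z
and its kernel is the annihilator of Z↓. -/
theorem stmt15 {n : ℕ} (Z : Submodule ℂ (MvPowerSeries (Fin n) ℂ))
    [FiniteDimensional ℂ Z]
    (hZD : ∀ f ∈ Z, ∀ i : Fin n, pderivPS i f ∈ Z)
    (hD : DInvP (leastSpace Z))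
    (T : MvPowerSeries (Fin n) ℂ → MvPowerSeries (Fin n) ℂ)
    (hTZ : ∀ f, T f ∈ Z)
    (hTadj : ∀ f, ∀ p ∈ leastSpace Z, pairS p (T f) = pairS p f) :
    (∀ f ∈ Z, T f = f) ∧
    (∀ f, T f = 0 ↔ ∀ p ∈ leastSpace Z, pairS p f = 0) :=
  stmt15_general Z T hTZ hTadj
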